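/- arXiv:1805.03814 — 2 statements merged into one kernel-verified Lean document; each statement's English description precedes it below -/
import Mathlib

section
/- Let $K$ be a field carrying a valuation $v$ with value group $\Gamma = v(K^\times)$, and let $q$ be a prime number different from the characteristic of $K$. If the quotient $\Gamma/q\Gamma$ is infinite, then $K$ is not bounded; that is, there exists a positive integer $n$ such that there are infinitely many intermediate fields $E$ of a fixed algebraic closure of $K$ with $E/K$ Galois of degree $n$. -/
/-!
Adjoining to `K` the `q`-th roots of a unit gives a Galois extension of degree at most `q!`.
A finite Galois extension `F/K` contains `q`-th roots of only finitely many classes of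
`Kˣ/(Kˣ)^q`: by Kummer theory, `α ↦ (σ ↦ σα/α)` separates these classes and takes values in the
finite set of maps `Gal(F/K) → μ_q(F)`. Hence infinitely many classes produce infinitely many
such fields, and infinitely many of them share a degree. The valuation maps `Kˣ/(Kˣ)^q` onto
`Γ/qΓ`, so `Kˣ/(Kˣ)^q` is infinite.
-/

open Polynomial IntermediateField

theorem Nat.Prime.cast_ne_zero_of_ringChar_ne {R : Type*} [Ring R] [Nontrivial R] {p : ℕ}
    (hp : p.Prime) (h : ringChar R ≠ p) : (p : R) ≠ 0 := fun h0 =>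
  ((Nat.dvd_prime hp).mp (ringChar.dvd h0)).elim CharP.ringChar_ne_one h

theorem infinite_quotient_powMonoidHom_range_of_surjective {G H : Type*} [CommGroup G]
    [CommGroup H] {f : G →* H} (hf : Function.Surjective f) (n : ℕ)
    [Infinite (H ⧸ (powMonoidHom n : H →* H).range)] :
    Infinite (G ⧸ (powMonoidHom n : G →* G).range) := by
  have hpow : (powMonoidHom n : G →* G).range ≤ (powMonoidHom n : H →* H).range.comap f := by
    rintro _ ⟨g, rfl⟩
    exact ⟨f g, (map_pow f g n).symm⟩
  exact Infinite.of_surjective _ <| QuotientGroup.map_surjective_of_surjective _ _ f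
    (QuotientGroup.mk_surjective.comp hf) hpow

theorem Valuation.surjective_unitsMap {K Γ₀ : Type*} [Field K]
    [LinearOrderedCommGroupWithZero Γ₀]
    (v : Valuation K Γ₀) (hsurj : ∀ γ : Γ₀ˣ, ∃ x : Kˣ, v (x : K) = (γ : Γ₀)) :
    Function.Surjective (Units.map (v : K →* Γ₀)) := fun γ =>
  (hsurj γ).imp fun _ hx => Units.ext hx

section SplittingField

variable {K L : Type*} [Field K] [Field L] [Algebra K L]

theorem Polynomial.Gal.card_le_factorial_natDegree {p : K[X]} (hp : p.Separable) :
    Nat.card p.Gal ≤ p.natDegree.factorial := by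
  have : Fact (p.map (algebraMap K p.SplittingField)).Splits := ⟨SplittingField.splits p⟩
  calc Nat.card p.Gal ≤ Nat.card (Equiv.Perm (p.rootSet p.SplittingField)) :=
        Nat.card_le_card_of_injective _ (galActionHom_injective p p.SplittingField)
    _ = (Nat.card (p.rootSet p.SplittingField)).factorial := Nat.card_perm
    _ = p.natDegree.factorial := by
        rw [Nat.card_eq_fintype_card, card_rootSet_eq_natDegree hp (SplittingField.splits p)]

theorem Polynomial.IsSplittingField.finrank_le_factorial_natDegree {p : K[X]} (hp : p.Separable)
    [p.IsSplittingField K L] : Module.finrank K L ≤ p.natDegree.factorial := by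
  rw [(IsSplittingField.algEquiv L p).toLinearEquiv.finrank_eq, ← Gal.card_of_separable hp]
  exact Gal.card_le_factorial_natDegree hp

theorem IntermediateField.isGalois_adjoin_rootSet {p : K[X]} (hp : p.Separable)
    (hs : (p.map (algebraMap K L)).Splits) : IsGalois K (adjoin K (p.rootSet L)) :=
  have := adjoin_rootSet_isSplittingField hs
  IsGalois.of_separable_splitting_field hp

theorem IntermediateField.finiteDimensional_adjoin_rootSet {p : K[X]}
    (hs : (p.map (algebraMap K L)).Splits) : FiniteDimensional K (adjoin K (p.rootSet L)) :=
  have := adjoin_rootSet_isSplittingField hs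
  IsSplittingField.finiteDimensional _ p

theorem IntermediateField.exists_pow_eq_algebraMap_mem_adjoin_rootSet_X_pow_sub_C [IsAlgClosed L]
    {n : ℕ} (hn : 0 < n) (a : K) :
    ∃ β ∈ adjoin K ((X ^ n - C a).rootSet L), β ^ n = algebraMap K L a := by
  obtain ⟨β, hβ⟩ := IsAlgClosed.exists_pow_nat_eq (algebraMap K L a) hn
  refine ⟨β, subset_adjoin _ _ ?_, hβ⟩
  rw [mem_rootSet]
  exact ⟨X_pow_sub_C_ne_zero hn a, by simp [hβ]⟩

theorem IntermediateField.exists_infinite_setOf_isGalois_finrank_eq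
    {S : Set (IntermediateField K L)} (hS : S.Infinite) {N : ℕ}
    (hS_gal : ∀ E ∈ S, IsGalois K E ∧ FiniteDimensional K E ∧ Module.finrank K E ≤ N) :
    ∃ d, 0 < d ∧
      {E : IntermediateField K L | IsGalois K E ∧ Module.finrank K E = d}.Infinite := by
  by_contra! hfin
  refine hS <| Set.Finite.subset
    ((Finset.Icc 1 N).finite_toSet.biUnion fun d hd => hfin d (Finset.mem_Icc.mp hd).1) ?_
  intro E hE
  obtain ⟨hgal, hfd, hle⟩ := hS_gal E hE
  exact Set.mem_biUnion (Finset.mem_Icc.mpr ⟨Module.finrank_pos, hle⟩) ⟨hgal, rfl⟩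

end SplittingField

section Kummer

variable {K F : Type*} [Field K] [Field F] [Algebra K F] [FiniteDimensional K F] [IsGalois K F]

theorem mk_eq_mk_of_forall_aut_div_eq {n : ℕ} (hn : n ≠ 0) {x y : Kˣ} {β γ : F}
    (hβ : β ^ n = algebraMap K F x) (hγ : γ ^ n = algebraMap K F y)
    (h : ∀ σ : F ≃ₐ[K] F, σ β / β = σ γ / γ) :
    (x : Kˣ ⧸ (powMonoidHom n : Kˣ →* Kˣ).range) = y := by
  have hne : ∀ {δ : F} {z : Kˣ}, δ ^ n = algebraMap K F z → δ ≠ 0 := by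
    rintro δ z hδ rfl
    simp [zero_pow hn, eq_comm (a := (0 : F))] at hδ
  have hfixed : ∀ σ : F ≃ₐ[K] F, σ (β / γ) = β / γ := by
    intro σ
    have hσγ : σ γ ≠ 0 := by simpa using hne hγ
    have := (div_eq_div_iff (hne hβ) (hne hγ)).mp (h σ)
    rw [map_div₀, div_eq_div_iff hσγ (hne hγ)]
    linear_combination this
  obtain ⟨k, hk⟩ := (IsGalois.mem_range_algebraMap_iff_fixed (β / γ)).mpr hfixed
  have hk0 : k ≠ 0 := by
    rintro rfl
    exact div_ne_zero (hne hβ) (hne hγ) (by simpa using hk.symm)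
  have hxy : (x : K) = k ^ n * y := by
    apply (algebraMap K F).injective
    rw [map_mul, map_pow, hk, ← hβ, ← hγ, div_pow,
      div_mul_cancel₀ _ (pow_ne_zero n (hne hγ))]
  refine QuotientGroup.eq.mpr ⟨(Units.mk0 k hk0)⁻¹, Units.ext ?_⟩
  simp only [powMonoidHom_apply, inv_pow, Units.val_inv_eq_inv_val, Units.val_pow_eq_pow_val,
    Units.val_mk0, Units.val_mul, hxy, mul_inv_rev]
  field_simp

theorem finite_image_mk_setOf_pow_eq_algebraMap {n : ℕ} (hn : n ≠ 0) :
    (QuotientGroup.mk '' {x : Kˣ | ∃ β : F, β ^ n = algebraMap K F x} :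
      Set (Kˣ ⧸ (powMonoidHom n : Kˣ →* Kˣ).range)).Finite := by
  set S := (QuotientGroup.mk '' {x : Kˣ | ∃ β : F, β ^ n = algebraMap K F x} :
      Set (Kˣ ⧸ (powMonoidHom n : Kˣ →* Kˣ).range))
  choose x hxS hx using fun c : S => c.2
  choose β hβ using hxS
  have hroot : ∀ c (σ : F ≃ₐ[K] F), σ (β c) / β c ∈ nthRootsFinset n (1 : F) := by
    intro c σ
    rw [mem_nthRootsFinset (Nat.pos_of_ne_zero hn), div_pow, ← map_pow, hβ, AlgEquiv.commutes,
      div_self]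
    simp
  rw [← Set.finite_coe_iff]
  refine Finite.of_injective
    (fun c σ => (⟨σ (β c) / β c, hroot c σ⟩ : nthRootsFinset n (1 : F)))
    fun c d hcd => Subtype.ext ?_
  rw [← hx c, ← hx d]
  exact mk_eq_mk_of_forall_aut_div_eq hn (hβ c) (hβ d) fun σ =>
    congrArg Subtype.val (congrFun hcd σ)

end Kummer

theorem exists_infinite_setOf_isGalois_finrank_eq_of_infinite_quotient_pow {K : Type*} [Field K]
    {n : ℕ} (hn : (n : K) ≠ 0) [Infinite (Kˣ ⧸ (powMonoidHom n : Kˣ →* Kˣ).range)] :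
    ∃ d, 0 < d ∧ {E : IntermediateField K (AlgebraicClosure K) |
      IsGalois K E ∧ Module.finrank K E = d}.Infinite := by
  have hn0 : 0 < n := Nat.pos_of_ne_zero <| by rintro rfl; simp at hn
  set p : Kˣ ⧸ (powMonoidHom n : Kˣ →* Kˣ).range → K[X] := fun c => X ^ n - C (c.out : K)
  have hsep : ∀ c, (p c).Separable := fun c => separable_X_pow_sub_C _ hn c.out.ne_zero
  have hs : ∀ c, ((p c).map (algebraMap K (AlgebraicClosure K))).Splits :=
    fun c => IsAlgClosed.splits _
  set E := fun c => adjoin K ((p c).rootSet (AlgebraicClosure K))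
  have hfibre : ∀ F, (E ⁻¹' {F}).Finite := by
    intro F
    obtain hF | ⟨c₀, hc₀⟩ := (E ⁻¹' {F}).eq_empty_or_nonempty
    · simp [hF]
    have := isGalois_adjoin_rootSet (hsep c₀) (hs c₀)
    have := finiteDimensional_adjoin_rootSet (hs c₀)
    refine (finite_image_mk_setOf_pow_eq_algebraMap (F := E c₀) hn0.ne').subset fun c hc => ?_
    obtain ⟨β, hβE, hβ⟩ := exists_pow_eq_algebraMap_mem_adjoin_rootSet_X_pow_sub_C
      (L := AlgebraicClosure K) hn0 c.out.val
    have hβE₀ : β ∈ E c₀ := (hc.trans hc₀.symm : E c = E c₀) ▸ hβE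
    exact ⟨c.out, ⟨⟨β, hβE₀⟩, Subtype.ext hβ⟩, QuotientGroup.out_eq' c⟩
  have hrange : (Set.range E).Infinite := fun hfin =>
    Set.infinite_univ (by simpa using hfin.preimage' fun F _ => hfibre F)
  refine exists_infinite_setOf_isGalois_finrank_eq hrange (N := n.factorial) ?_
  rintro _ ⟨c, rfl⟩
  have := adjoin_rootSet_isSplittingField (hs c)
  refine ⟨isGalois_adjoin_rootSet (hsep c) (hs c), finiteDimensional_adjoin_rootSet (hs c), ?_⟩
  simpa [p] using IsSplittingField.finrank_le_factorial_natDegree (hsep c)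

/-- Let `K` be a field carrying a valuation `v` with value group
`Γ = v(Kˣ)` (presented as the unit group `Γ₀ˣ` of a linearly ordered commutative group with zero,
onto which `v` is assumed to map `Kˣ`), and let `q` be a prime different from the characteristic
of `K`. If `Γ ⧸ qΓ` (multiplicatively: `Γ₀ˣ` modulo `q`-th powers) is infinite, then `K` is not
bounded: there is a positive integer `n` such that there are infinitely many intermediate fields
`E` of a fixed algebraic closure of `K` with `E/K` Galois of degree `n`. -/
theorem not_bounded_of_infinite_valueGroup_quotient
    {K : Type*} [Field K] {Γ₀ : Type*} [LinearOrderedCommGroupWithZero Γ₀]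
    (v : Valuation K Γ₀) (hsurj : ∀ γ : Γ₀ˣ, ∃ x : Kˣ, v (x : K) = (γ : Γ₀))
    (q : ℕ) (hq : q.Prime) (hchar : ringChar K ≠ q)
    (h : Infinite (Γ₀ˣ ⧸ (powMonoidHom q : Γ₀ˣ →* Γ₀ˣ).range)) :
    ∃ n : ℕ, 0 < n ∧
      {E : IntermediateField K (AlgebraicClosure K) |
        IsGalois K ↥E ∧ Module.finrank K ↥E = n}.Infinite := by
  have := infinite_quotient_powMonoidHom_range_of_surjective (v.surjective_unitsMap hsurj) q
  exact exists_infinite_setOf_isGalois_finrank_eq_of_infinite_quotient_pow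
    (hq.cast_ne_zero_of_ringChar_ne hchar)
end

section
/- Call a profinite group small if for every positive integer $n$ it has only finitely many open subgroups of index $n$. Let $G$ be a profinite group and let $N$ be a closed normal subgroup of $G$. If $N$ (with the subspace topology) and the quotient $G/N$ (with the quotient topology) are both small, then $G$ is small. -/
/-- A topological group is *small* if for every positive integer `n` it has only finitely many
open subgroups of index `n`. -/
def SmallTopGroup (G : Type*) [Group G] [TopologicalSpace G] : Prop :=
  ∀ n : ℕ, 0 < n → {H : Subgroup G | IsOpen (H : Set G) ∧ H.index = n}.Finite

/-!
An open subgroup of index `n` contains its normal core, an open normal subgroup of index at most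
`n!`, and only finitely many subgroups contain a given subgroup of finite index; so it suffices
to see that `G` has finitely many open normal subgroups `H` of index at most `m`. Such an `H`
yields the open subgroups `H ∩ N` of `N` and `HN/N` of `G/N`, both of index at most `m`, and
there are finitely many of these. If `H₀` yields the same pair, then `H` is determined by the
homomorphism `H₀ → N/(N ∩ H₀)` sending `a` to the class of any `n ∈ N` with `a ∈ nH`. Its kernel
`H ∩ H₀` is open and contains `N ∩ H₀`, so it factors through the image of `H₀` in the small
group `G/N`, which leaves finitely many possibilities.
-/

open scoped Pointwise

namespace Subgroup

variable {G : Type*} [Group G]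

theorem finite_setOf_le (K : Subgroup G) [Finite (G ⧸ K)] : {H : Subgroup G | K ≤ H}.Finite := by
  have preimage_image : ∀ H : Subgroup G, K ≤ H →
      ((↑) : G → G ⧸ K) ⁻¹' ((↑) '' (H : Set G)) = H := fun H hKH => by
    ext g
    rw [QuotientGroup.preimage_image_mk_eq_mul]
    exact ⟨fun ⟨h, hh, k, hk, hg⟩ => hg ▸ H.mul_mem hh (hKH hk),
      fun hg => ⟨g, hg, 1, K.one_mem, mul_one g⟩⟩
  refine Set.Finite.of_finite_image (f := fun H : Subgroup G => ((↑) : G → G ⧸ K) '' H)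
    (Set.toFinite _) fun H hH H' hH' h => SetLike.coe_injective ?_
  rw [← preimage_image H hH, ← preimage_image H' hH']
  exact congrArg _ h

theorem index_normalCore_le_factorial (H : Subgroup G) [H.FiniteIndex] :
    H.normalCore.index ≤ H.index.factorial := by
  rw [normalCore_eq_ker, index_ker, index, ← Nat.card_perm]
  exact Nat.card_le_card_of_injective _ (subtype_injective _)

theorem index_pos_of_isOpen [TopologicalSpace G] [IsTopologicalGroup G] [CompactSpace G]
    {H : Subgroup G} (hH : IsOpen (H : Set G)) : 0 < H.index :=
  have := H.quotient_finite_of_isOpen hH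
  Nat.pos_of_ne_zero index_ne_zero_of_finite

theorem exists_inv_mul_mem_of_mem_sup {N H : Subgroup G} [H.Normal] {x : G} (hx : x ∈ N ⊔ H) :
    ∃ n : N, (n : G)⁻¹ * x ∈ H := by
  rw [← SetLike.mem_coe, mul_normal N H] at hx
  obtain ⟨n, hn, h, hh, rfl⟩ := hx
  exact ⟨⟨n, hn⟩, by simpa using hh⟩

section QuotientHomOfLeSup

variable {N H : Subgroup G} {M : Subgroup N}

theorem mk_eq_mk_iff_inv_mul_mem (hM : H.subgroupOf N = M) {x : G} {n n' : N}
    (hn : (n : G)⁻¹ * x ∈ H) : (n : N ⧸ M) = n' ↔ (n' : G)⁻¹ * x ∈ H := by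
  have hx : (n' : G)⁻¹ * x = ((n : G)⁻¹ * n')⁻¹ * ((n : G)⁻¹ * x) := by group
  rw [QuotientGroup.eq, ← hM, mem_subgroupOf, hx, H.mul_mem_cancel_right hn, inv_mem_iff]
  rfl

variable [H.Normal] [M.Normal]

/-- The composite `A → (N ⊔ H) ⧸ H ≃ N ⧸ (N ⊓ H)`, sending `a` to the class of any `n ∈ N` with
`a ∈ n H`. -/
noncomputable def quotientHomOfLeSup (hM : H.subgroupOf N = M) (A : Subgroup G)
    (hA : A ≤ N ⊔ H) : A →* N ⧸ M :=
  have hchoose (a : A) := (exists_inv_mul_mem_of_mem_sup (hA a.2)).choose_spec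
  MonoidHom.mk' (fun a => (exists_inv_mul_mem_of_mem_sup (hA a.2)).choose) fun a b => by
    rw [← QuotientGroup.mk_mul, mk_eq_mk_iff_inv_mul_mem hM (hchoose (a * b))]
    set n := (exists_inv_mul_mem_of_mem_sup (hA a.2)).choose
    set n' := (exists_inv_mul_mem_of_mem_sup (hA b.2)).choose
    have h : ((n * n' : N) : G)⁻¹ * (a * b : A) =
        (n' : G)⁻¹ * ((n : G)⁻¹ * a) * n' * ((n' : G)⁻¹ * b) := by push_cast; group
    rw [h]
    exact H.mul_mem (by simpa using ‹H.Normal›.conj_mem _ (hchoose a) (n' : G)⁻¹) (hchoose b)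

variable (hM : H.subgroupOf N = M) {A : Subgroup G} (hA : A ≤ N ⊔ H)

theorem quotientHomOfLeSup_apply_eq_mk_iff (a : A) (n : N) :
    quotientHomOfLeSup hM A hA a = n ↔ (n : G)⁻¹ * a ∈ H :=
  mk_eq_mk_iff_inv_mul_mem hM (exists_inv_mul_mem_of_mem_sup (hA a.2)).choose_spec

theorem ker_quotientHomOfLeSup : (quotientHomOfLeSup hM A hA).ker = H.subgroupOf A := by
  ext a
  rw [MonoidHom.mem_ker, ← QuotientGroup.mk_one, quotientHomOfLeSup_apply_eq_mk_iff,
    mem_subgroupOf]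
  simp

theorem subgroupOf_le_ker_quotientHomOfLeSup (hAM : A.subgroupOf N ≤ M) :
    N.subgroupOf A ≤ (quotientHomOfLeSup hM A hA).ker := by
  rw [ker_quotientHomOfLeSup]
  intro a ha
  have : (⟨a, ha⟩ : N) ∈ H.subgroupOf N := hM ▸ hAM a.2
  exact this

theorem le_of_quotientHomOfLeSup_eq [N.Normal] {H' : Subgroup G} [H'.Normal]
    (hM' : H'.subgroupOf N = M) (hA' : A ≤ N ⊔ H') (hH : H ≤ N ⊔ A)
    (h : quotientHomOfLeSup hM A hA = quotientHomOfLeSup hM' A hA') : H ≤ H' := by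
  intro x hx
  obtain ⟨n, hn, a, ha, rfl⟩ : x ∈ (N : Set G) * (A : Set G) := by
    rw [← normal_mul]; exact hH hx
  have key (K : Subgroup G) [K.Normal] (hMK : K.subgroupOf N = M) (hAK : A ≤ N ⊔ K) :
      quotientHomOfLeSup hMK A hAK ⟨a, ha⟩ = (⟨n, hn⟩⁻¹ : N) ↔ n * a ∈ K := by
    rw [quotientHomOfLeSup_apply_eq_mk_iff]
    simp
  rwa [← key H' hM' hA', ← h, key H hM hA]

end QuotientHomOfLeSup

end Subgroup

theorem MonoidHom.finite_setOf_le_ker {A F : Type*} [Group A] [Group F] [Finite F]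
    (L : Subgroup A) [Finite (A ⧸ L)] : {f : A →* F | L ≤ f.ker}.Finite := by
  refine Set.Finite.of_finite_image (f := fun f : A →* F => fun q : A ⧸ L => f q.out)
    (Set.toFinite _) fun f hf f' hf' h => MonoidHom.ext fun a => ?_
  have hout : (a : A ⧸ L).out⁻¹ * a ∈ L := QuotientGroup.eq.mp (QuotientGroup.out_eq' _)
  rw [(f.eq_iff).mpr (hf hout), (f'.eq_iff).mpr (hf' hout)]
  exact congrFun h a

namespace SmallTopGroup

variable {A B : Type*} [Group A] [TopologicalSpace A] [Group B] [TopologicalSpace B]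

theorem finite_setOf_index_le (hB : SmallTopGroup B) (m : ℕ) :
    {H : Subgroup B | IsOpen (H : Set B) ∧ 0 < H.index ∧ H.index ≤ m}.Finite := by
  refine ((Set.finite_Icc 1 m).biUnion fun n hn => hB n hn.1).subset ?_
  rintro H ⟨hHo, hpos, hle⟩
  exact Set.mem_biUnion (show H.index ∈ Set.Icc 1 m from ⟨hpos, hle⟩) ⟨hHo, rfl⟩

theorem finite_setOf_ker_le_ker (hB : SmallTopGroup B) {F : Type*} [Group F] [Finite F]
    (φ : A →* B) (hφ : IsOpenMap φ) [φ.range.FiniteIndex] :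
    {f : A →* F | φ.ker ≤ f.ker ∧ IsOpen (f.ker : Set A)}.Finite := by
  set 𝒳 := {X : Subgroup A | φ.ker ≤ X ∧ IsOpen (X : Set A) ∧ 0 < X.index ∧
    X.index ≤ Nat.card F}
  have h𝒳 : 𝒳.Finite := by
    refine Set.Finite.of_finite_image (f := Subgroup.map φ)
      ((hB.finite_setOf_index_le (Nat.card F * φ.range.index)).subset ?_)
      fun X hX X' hX' => Subgroup.map_injective_of_ker_le φ hX.1 hX'.1
    rintro _ ⟨X, ⟨hker, hXo, hpos, hle⟩, rfl⟩
    have hidx : (X.map φ).index = X.index * φ.range.index := by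
      rw [Subgroup.index_map, sup_of_le_left hker]
    refine ⟨by rw [Subgroup.coe_map]; exact hφ _ hXo, ?_, ?_⟩
    · rw [hidx]; exact Nat.mul_pos hpos (Nat.pos_of_ne_zero Subgroup.FiniteIndex.index_ne_zero)
    · rw [hidx]; exact Nat.mul_le_mul_right _ hle
  refine (h𝒳.biUnion (t := fun X => {f : A →* F | X ≤ f.ker}) fun X hX => ?_).subset ?_
  · have : X.FiniteIndex := ⟨hX.2.2.1.ne'⟩
    exact MonoidHom.finite_setOf_le_ker X
  · rintro f ⟨hker, hopen⟩
    refine Set.mem_biUnion (x := f.ker) ⟨hker, hopen, ?_, ?_⟩ (le_refl f.ker)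
    · rw [Subgroup.index_ker]; exact Nat.card_pos
    · rw [Subgroup.index_ker]
      exact Nat.card_le_card_of_injective _ (Subgroup.subtype_injective _)

end SmallTopGroup

section Extension

open Subgroup

variable {G : Type*} [Group G] [TopologicalSpace G] [IsTopologicalGroup G] [CompactSpace G]

theorem SmallTopGroup.of_finite_setOf_normal
    (h : ∀ m, {H : Subgroup G | H.Normal ∧ IsOpen (H : Set G) ∧ H.index ≤ m}.Finite) :
    SmallTopGroup G := by
  intro n _
  refine ((h n.factorial).biUnion (t := fun C => {H : Subgroup G | C ≤ H})
    fun C hC => ?_).subset ?_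
  · have := C.quotient_finite_of_isOpen hC.2.1
    exact C.finite_setOf_le
  · rintro H ⟨hHo, rfl⟩
    have : H.FiniteIndex := ⟨(index_pos_of_isOpen hHo).ne'⟩
    refine Set.mem_biUnion ⟨H.normalCore_normal,
      H.normalCore.isOpen_of_isClosed_of_finiteIndex
        (H.normalCore_isClosed (H.isClosed_of_isOpen hHo)),
      H.index_normalCore_le_factorial⟩ H.normalCore_le

variable {N : Subgroup G} [N.Normal]

theorem finite_setOf_normal_subgroupOf_eq_map_eq (hN : IsClosed (N : Set G))
    (h₂ : SmallTopGroup (G ⧸ N)) (M : Subgroup N) (K : Subgroup (G ⧸ N)) :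
    {H : Subgroup G | H.Normal ∧ IsOpen (H : Set G) ∧ H.subgroupOf N = M ∧
      H.map (QuotientGroup.mk' N) = K}.Finite := by
  set S := {H : Subgroup G | H.Normal ∧ IsOpen (H : Set G) ∧ H.subgroupOf N = M ∧
      H.map (QuotientGroup.mk' N) = K}
  rcases S.eq_empty_or_nonempty with hS | ⟨H₀, hH₀n, hH₀o, hH₀M, hH₀K⟩
  · exact hS ▸ Set.finite_empty
  have : M.Normal := hH₀M ▸ inferInstance
  have : CompactSpace N := isCompact_iff_compactSpace.mp hN.isCompact
  have : Finite (N ⧸ M) := M.quotient_finite_of_isOpen (hH₀M ▸ subgroupOf_isOpen N H₀ hH₀o)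
  have hsup : ∀ H ∈ S, N ⊔ H = N ⊔ H₀ := by
    rintro H ⟨-, -, -, hHK⟩
    rw [sup_comm, sup_comm N, ← QuotientGroup.ker_mk' N, ← comap_map_eq, ← comap_map_eq, hHK,
      hH₀K]
  let φ : H₀ →* G ⧸ N := (QuotientGroup.mk' N).comp H₀.subtype
  have hφ : IsOpenMap φ := QuotientGroup.isOpenMap_coe.comp hH₀o.isOpenMap_subtype_val
  have := quotient_finite_of_isOpen φ.range (φ.coe_range ▸ hφ.isOpen_range)
  have : φ.range.FiniteIndex := finiteIndex_of_finite_quotient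
  have := (h₂.finite_setOf_ker_le_ker (F := N ⧸ M) φ hφ).to_subtype
  have hφker : φ.ker = N.subgroupOf H₀ := by
    rw [← MonoidHom.comap_ker, QuotientGroup.ker_mk']
    rfl
  let Φ : S → {f : H₀ →* N ⧸ M | φ.ker ≤ f.ker ∧ IsOpen (f.ker : Set H₀)} := fun H =>
    have := H.2.1
    ⟨quotientHomOfLeSup H.2.2.2.1 H₀ (le_sup_right.trans (hsup H H.2).ge),
      hφker ▸ subgroupOf_le_ker_quotientHomOfLeSup _ _ hH₀M.le,
      by rw [ker_quotientHomOfLeSup]; exact subgroupOf_isOpen _ _ H.2.2.1⟩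
  have hle (H H' : S) (h : Φ H = Φ H') : (H : Subgroup G) ≤ H' :=
    have := H.2.1
    have := H'.2.1
    le_of_quotientHomOfLeSup_eq H.2.2.2.1 (le_sup_right.trans (hsup H H.2).ge) H'.2.2.2.1
      (le_sup_right.trans (hsup H' H'.2).ge) (le_sup_right.trans (hsup H H.2).le)
      (congrArg Subtype.val h)
  have : Finite S := Finite.of_injective Φ fun H H' h =>
    Subtype.ext (le_antisymm (hle H H' h) (hle H' H h.symm))
  exact Set.toFinite S

theorem finite_setOf_normal_index_le (hN : IsClosed (N : Set G)) (h₁ : SmallTopGroup N)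
    (h₂ : SmallTopGroup (G ⧸ N)) (m : ℕ) :
    {H : Subgroup G | H.Normal ∧ IsOpen (H : Set G) ∧ H.index ≤ m}.Finite := by
  have : CompactSpace N := isCompact_iff_compactSpace.mp hN.isCompact
  refine (((h₁.finite_setOf_index_le m).prod (h₂.finite_setOf_index_le m)).biUnion
    (t := fun p => {H : Subgroup G | H.Normal ∧ IsOpen (H : Set G) ∧ H.subgroupOf N = p.1 ∧
      H.map (QuotientGroup.mk' N) = p.2})
    fun p _ => finite_setOf_normal_subgroupOf_eq_map_eq hN h₂ p.1 p.2).subset ?_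
  rintro H ⟨hHn, hHo, hle⟩
  have hpos := index_pos_of_isOpen hHo
  have hMo := subgroupOf_isOpen N H hHo
  have hKo : IsOpen (H.map (QuotientGroup.mk' N) : Set (G ⧸ N)) := by
    rw [coe_map]; exact QuotientGroup.isOpenMap_coe _ hHo
  refine Set.mem_biUnion (x := (H.subgroupOf N, H.map (QuotientGroup.mk' N)))
    ⟨⟨hMo, index_pos_of_isOpen hMo, ?_⟩, ⟨hKo, index_pos_of_isOpen hKo, ?_⟩⟩
    ⟨hHn, hHo, rfl, rfl⟩
  · exact (Nat.le_of_dvd hpos (relIndex_dvd_index_of_normal H N)).trans hle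
  · exact (Nat.le_of_dvd hpos (H.index_map_dvd (QuotientGroup.mk'_surjective N))).trans hle

end Extension

theorem smallTopGroup_of_closed_normal_subgroup_general
    {G : Type*} [Group G] [TopologicalSpace G] [IsTopologicalGroup G]
    [CompactSpace G]
    (N : Subgroup G) [N.Normal] (hN : IsClosed (N : Set G))
    (h₁ : SmallTopGroup ↥N) (h₂ : SmallTopGroup (G ⧸ N)) :
    SmallTopGroup G :=
  SmallTopGroup.of_finite_setOf_normal (finite_setOf_normal_index_le hN h₁ h₂)

/-- Let `G` be a profinite group (compact, Hausdorff, totally disconnected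
topological group) and `N` a closed normal subgroup of `G`. If `N` (with the subspace topology)
and `G ⧸ N` (with the quotient topology) are both small, then `G` is small. -/
theorem smallTopGroup_of_closed_normal_subgroup
    {G : Type*} [Group G] [TopologicalSpace G] [IsTopologicalGroup G]
    [CompactSpace G] [T2Space G] [TotallyDisconnectedSpace G]
    (N : Subgroup G) [N.Normal] (hN : IsClosed (N : Set G))
    (h₁ : SmallTopGroup ↥N) (h₂ : SmallTopGroup (G ⧸ N)) :
    SmallTopGroup G :=
  smallTopGroup_of_closed_normal_subgroup_general N hN h₁ h₂
end
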